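/- On a smooth manifold, let Z be a smooth complex two-form and h a smooth complex one-form with dZ = −h ∧ Z, let Ψ be a smooth nowhere-vanishing function with 2 dΨ = 3 Ψ h, let ψ be smooth with dψ = −(1/2)ψ h, and let ξ be a smooth vector field. Then ψ ξ(Ψ) Z + (3/2) ψ Ψ L_ξ Z = (3/2) d(ψ Ψ (ι_ξ Z)), where L_ξ Z = d(ι_ξ Z) + ι_ξ(dZ) is the Lie derivative. -/

import Mathlib

noncomputable section

variable {E : Type*} [NormedAddCommGroup E] [NormedSpace ℝ E]

/-- A (complex-valued) `k`-form on `E`, given by its evaluation on `k`-tuples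
of tangent vectors. -/
def Form (E : Type*) (k : ℕ) := E → (Fin k → E) → ℂ

/-- The exterior derivative, `dω(v₀,…,v_k) = ∑ (−1)^i ∂_{v_i} ω(v₀,…,v̂_i,…,v_k)`. -/
def extD {k : ℕ} (ω : Form E k) : Form E (k + 1) := fun x v =>
  ∑ i : Fin (k + 1),
    (-1 : ℂ) ^ (i : ℕ) * fderiv ℝ (fun y => ω y (fun j => v (i.succAbove j))) x (v i)

/-- The wedge product of a 1-form with a 2-form. -/
def w12 (h : Form E 1) (Z : Form E 2) : Form E 3 := fun x v =>
  ∑ i : Fin 3, (-1 : ℂ) ^ (i : ℕ) * h x ![v i] * Z x (fun j => v (i.succAbove j))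

/-- Interior product of a vector field with a `(k+1)`-form. -/
def iotaF (ξ : E → E) {k : ℕ} (ω : Form E (k + 1)) : Form E k := fun x v =>
  ω x (Fin.cons (ξ x) v)

/-- Multiplication of a form by a function. -/
def smulF (f : E → ℂ) {k : ℕ} (ω : Form E k) : Form E k := fun x v => f x * ω x v

/-- with `dZ = −h∧Z`, `2dΨ = 3Ψh` (`Ψ` nowhere zero),
`dψ = −(1/2)ψh` and `ξ` a smooth vector field, one has
`ψ ξ(Ψ) Z + (3/2) ψΨ L_ξ Z = (3/2) d(ψΨ (ι_ξ Z))`, where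
`L_ξ Z = d(ι_ξ Z) + ι_ξ(dZ)` is the Lie derivative (Cartan's magic formula).
This shows that the coordinate-gauge variation of the linearized mass
two-form is exact. -/
theorem gauge_variation_exact
    (Ψ ψ : E → ℂ) (h : Form E 1) (Z : Form E 2) (ξ : E → E)
    (hΨ : ContDiff ℝ (⊤ : ℕ∞) Ψ) (hΨ0 : ∀ x, Ψ x ≠ 0)
    (hψ : ContDiff ℝ (⊤ : ℕ∞) ψ)
    (hξ : ContDiff ℝ (⊤ : ℕ∞) ξ)
    (hh : ContDiff ℝ (⊤ : ℕ∞) fun p : E × (Fin 1 → E) => h p.1 p.2)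
    (hZ : ContDiff ℝ (⊤ : ℕ∞) fun p : E × (Fin 2 → E) => Z p.1 p.2)
    (hdZ : ∀ x v, extD Z x v = - w12 h Z x v)
    (hdΨ : ∀ x (v : Fin 1 → E), 2 * fderiv ℝ Ψ x (v 0) = 3 * Ψ x * h x v)
    (hdψ : ∀ x (v : Fin 1 → E), fderiv ℝ ψ x (v 0) = -(1/2 : ℂ) * ψ x * h x v) :
    ∀ x (v : Fin 2 → E),
      ψ x * fderiv ℝ Ψ x (ξ x) * Z x v
        + (3/2 : ℂ) * (ψ x * Ψ x) * (extD (iotaF ξ Z) x v + iotaF ξ (extD Z) x v)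
      = (3/2 : ℂ) * extD (smulF (fun y => ψ y * Ψ y) (iotaF ξ Z)) x v := by
  intro x v
  have hΨd : DifferentiableAt ℝ Ψ x := (hΨ.differentiable (by simp)) x
  have hψd : DifferentiableAt ℝ ψ x := (hψ.differentiable (by simp)) x
  have hZd : ∀ w : Fin 1 → E, DifferentiableAt ℝ (fun y => Z y (Fin.cons (ξ y) w)) x := by
    intro w
    have h1 : ContDiff ℝ (⊤ : ℕ∞) (fun y => ((y, Fin.cons (ξ y) w) : E × (Fin 2 → E))) := by
      refine contDiff_id.prodMk ?_
      refine contDiff_pi.mpr fun j => ?_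
      induction j using Fin.cases with
      | zero => simpa using hξ
      | succ j => simpa using contDiff_const
    exact ((hZ.comp h1).differentiable (by simp)) x
  have dΨ' : ∀ u : E, fderiv ℝ Ψ x u = (3/2 : ℂ) * Ψ x * h x ![u] := by
    intro u
    have h1 := hdΨ x ![u]
    simp only [Matrix.cons_val_zero] at h1
    linear_combination h1 / 2
  have dψ' : ∀ u : E, fderiv ℝ ψ x u = -(1/2 : ℂ) * ψ x * h x ![u] := by
    intro u
    simpa using hdψ x ![u]
  have df : ∀ u : E, fderiv ℝ (fun y => ψ y * Ψ y) x u = ψ x * Ψ x * h x ![u] := by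
    intro u
    have h1 := fderiv_fun_mul hψd hΨd
    have h2 : fderiv ℝ (fun y => ψ y * Ψ y) x u
        = ψ x * fderiv ℝ Ψ x u + Ψ x * fderiv ℝ ψ x u := by
      rw [h1]; simp [smul_eq_mul]
    rw [h2, dΨ' u, dψ' u]; ring
  have key : ∀ (w : Fin 1 → E) (u : E),
      fderiv ℝ (fun y => ψ y * Ψ y * Z y (Fin.cons (ξ y) w)) x u
        = ψ x * Ψ x * h x ![u] * Z x (Fin.cons (ξ x) w)
          + ψ x * Ψ x * fderiv ℝ (fun y => Z y (Fin.cons (ξ y) w)) x u := by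
    intro w u
    have h1 := fderiv_fun_mul (c := fun y => ψ y * Ψ y) (hψd.mul hΨd) (hZd w)
    have h2 : fderiv ℝ (fun y => ψ y * Ψ y * Z y (Fin.cons (ξ y) w)) x u
        = ψ x * Ψ x * fderiv ℝ (fun y => Z y (Fin.cons (ξ y) w)) x u
          + Z x (Fin.cons (ξ x) w) * fderiv ℝ (fun y => ψ y * Ψ y) x u := by
      rw [h1]; simp [smul_eq_mul]
    rw [h2, df u]; ring
  have e0 : (fun j : Fin 2 => (Fin.cons (ξ x) v : Fin 3 → E) ((0 : Fin 3).succAbove j)) = v := by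
    funext j; fin_cases j <;> rfl
  have e1 : (fun j : Fin 2 => (Fin.cons (ξ x) v : Fin 3 → E) ((1 : Fin 3).succAbove j))
      = Fin.cons (ξ x) (fun j : Fin 1 => v ((0 : Fin 2).succAbove j)) := by
    funext j; fin_cases j <;> rfl
  have e2 : (fun j : Fin 2 => (Fin.cons (ξ x) v : Fin 3 → E) ((2 : Fin 3).succAbove j))
      = Fin.cons (ξ x) (fun j : Fin 1 => v ((1 : Fin 2).succAbove j)) := by
    funext j; fin_cases j <;> rfl
  have sum2 : ∀ f : Fin (1+1) → ℂ, ∑ i, f i = f 0 + f 1 := fun f => Fin.sum_univ_two f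
  have sum3 : ∀ f : Fin (2+1) → ℂ, ∑ i, f i = f 0 + f 1 + f 2 := fun f => Fin.sum_univ_three f
  have c1 : (Fin.cons (ξ x) v : Fin 3 → E) 1 = v 0 := rfl
  have c2 : (Fin.cons (ξ x) v : Fin 3 → E) 2 = v 1 := rfl
  rw [show iotaF ξ (extD Z) x v = extD Z x (Fin.cons (ξ x) v) from rfl, hdZ]
  simp only [extD, smulF, iotaF, w12, sum2, sum3]
  rw [key _ (v 0), key _ (v 1)]
  simp only [e0, e1, e2, c1, c2, Fin.cons_zero, dΨ' (ξ x), Fin.val_zero, Fin.val_one,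
    Fin.val_two, pow_zero, pow_one]
  norm_num
  ring

end
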